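/- Let a, b ∈ ℝ with a > b > 0 and let C = t² + 1 + ε(b·j·t + a·i) ∈ DH[t]. Set k₁ = −((a²−b²)·i − 2ab·k)/(a²+b²) − ε·((a²−b²)/(a²+b²))·j, k₂ = ((a²−b²)·i − 2ab·k)/(a²+b²) − ε·(((a²+b²)² − 2b(a²−b²))/(2b(a²+b²)))·j, k₃ = −i + ε·((a²−b²+2b)/(2b))·j, and k₄ = i − ε·j. Then (t² + 1)·C = (t − k₁)·(t − k₂)·(t − k₃)·(t − k₄). -/

import Mathlib

open Polynomial
noncomputable section

/-- The dual quaternions: dual numbers over the real quaternions. -/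
abbrev DH : Type := DualNumber (Quaternion ℝ)

/-- Dual quaternion conjugation: the conjugate of `p + εq` is `p̄ + εq̄`. -/
def dconj (h : DH) : DH :=
  TrivSqZeroExt.inl (star (TrivSqZeroExt.fst h)) + TrivSqZeroExt.inr (star (TrivSqZeroExt.snd h))

/-- Coefficientwise conjugation of a dual quaternion polynomial. -/
def pconj (P : Polynomial DH) : Polynomial DH :=
  P.sum fun n a => Polynomial.monomial n (dconj a)

/-- The quaternion unit i. -/
def qi : Quaternion ℝ := ⟨0,1,0,0⟩
/-- The quaternion unit j. -/
def qj : Quaternion ℝ := ⟨0,0,1,0⟩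
/-- The quaternion unit k. -/
def qk : Quaternion ℝ := ⟨0,0,0,1⟩

/-- A dual quaternion polynomial is real if all its coefficients are real scalars. -/
def IsRealPoly (P : Polynomial DH) : Prop :=
  ∃ r : Polynomial ℝ, P = r.map (algebraMap ℝ DH)

/-- The primal part of a dual quaternion polynomial. -/
def primalPart (C : Polynomial DH) : Polynomial (Quaternion ℝ) :=
  C.sum fun n a => Polynomial.monomial n (TrivSqZeroExt.fst a)

/-!
Write `A = t² + 1`, which is central. The roots pair up so that `(t - k₁)(t - k₂) = A + ε(s t + r)`
and `(t - k₃)(t - k₄) = A + ε(s' t + r')`: the primal parts of `k₁, k₂` are `∓w` for the unit pure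
quaternion `w = ((a² - b²) i - 2ab k)/(a² + b²)`, so their primal product is `-w² = 1`. As `ε² = 0`,
`(A + ε(s t + r))(A + ε(s' t + r')) = A (A + ε((s + s') t + (r + r')))`, and for the given roots
`s + s' = b j` and `r + r' = a i`.
-/

open TrivSqZeroExt

theorem add_mul_add_of_commute_of_mul_eq_zero {S : Type*} [Semiring S] {a e₁ e₂ : S}
    (ha : Commute a e₁) (he : e₁ * e₂ = 0) :
    (a + e₁) * (a + e₂) = a * (a + e₁ + e₂) := by
  simp only [add_mul, mul_add, he, ha.eq]
  abel

namespace Polynomial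

variable {R : Type*}

theorem C_mul_X_mul_C [Semiring R] (p q : R) : C p * X * C q = C (p * q) * X := by
  rw [mul_assoc, X_mul_C, ← mul_assoc, C_mul]

theorem X_sub_C_mul_X_sub_C [Ring R] (p q : R) :
    (X - C p) * (X - C q) = X ^ 2 - C (p + q) * X + C (p * q) := by
  simp only [sub_mul, mul_sub, ← C_mul, map_add, add_mul, (commute_X (C q)).eq]
  noncomm_ring

end Polynomial

namespace DualNumber

variable {R : Type*} [Ring R]

def epsLinear (s r : R) : (DualNumber R)[X] := C (inr s) * X + C (inr r)

theorem epsLinear_mul_epsLinear (s r s' r' : R) : epsLinear s r * epsLinear s' r' = 0 := by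
  simp only [epsLinear, add_mul, mul_add, ← mul_assoc, C_mul_X_mul_C, ← C_mul, inr_mul_inr,
    map_zero, zero_mul, add_zero]

theorem epsLinear_add_epsLinear (s r s' r' : R) :
    epsLinear s r + epsLinear s' r' = epsLinear (s + s') (r + r') := by
  simp only [epsLinear, inr_add, map_add, add_mul]
  abel

theorem X_sub_C_mul_X_sub_C_eq_X_sq_add_one_add_epsLinear {p q : DualNumber R} {s r : R}
    (hsum : p + q = -inr s) (hprod : p * q = 1 + inr r) :
    (X - C p) * (X - C q) = X ^ 2 + 1 + epsLinear s r := by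
  rw [X_sub_C_mul_X_sub_C, hsum, hprod, epsLinear, map_neg, map_add, C_1, neg_mul,
    sub_neg_eq_add]
  abel

theorem four_X_sub_C_mul_eq_X_sq_add_one_mul {k₁ k₂ k₃ k₄ : DualNumber R} {s r s' r' σ ρ : R}
    (h₁₂ : k₁ + k₂ = -inr s) (h₁₂' : k₁ * k₂ = 1 + inr r)
    (h₃₄ : k₃ + k₄ = -inr s') (h₃₄' : k₃ * k₄ = 1 + inr r')
    (hσ : s + s' = σ) (hρ : r + r' = ρ) :
    (X - C k₁) * (X - C k₂) * (X - C k₃) * (X - C k₄) =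
      (X ^ 2 + 1) * (X ^ 2 + 1 + C (inr σ) * X + C (inr ρ)) := by
  have hA : Commute (X ^ 2 + 1 : (DualNumber R)[X]) (epsLinear s r) :=
    ((commute_X _).pow_left 2).add_left (Commute.one_left _)
  rw [mul_assoc _ (X - C k₃), X_sub_C_mul_X_sub_C_eq_X_sq_add_one_add_epsLinear h₁₂ h₁₂',
    X_sub_C_mul_X_sub_C_eq_X_sq_add_one_add_epsLinear h₃₄ h₃₄',
    add_mul_add_of_commute_of_mul_eq_zero hA (epsLinear_mul_epsLinear _ _ _ _),
    add_assoc (X ^ 2 + 1), epsLinear_add_epsLinear, hσ, hρ, epsLinear, ← add_assoc]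

end DualNumber

@[simp] theorem qi_re : qi.re = 0 := rfl
@[simp] theorem qi_imI : qi.imI = 1 := rfl
@[simp] theorem qi_imJ : qi.imJ = 0 := rfl
@[simp] theorem qi_imK : qi.imK = 0 := rfl
@[simp] theorem qj_re : qj.re = 0 := rfl
@[simp] theorem qj_imI : qj.imI = 0 := rfl
@[simp] theorem qj_imJ : qj.imJ = 1 := rfl
@[simp] theorem qj_imK : qj.imK = 0 := rfl
@[simp] theorem qk_re : qk.re = 0 := rfl
@[simp] theorem qk_imI : qk.imI = 0 := rfl
@[simp] theorem qk_imJ : qk.imJ = 0 := rfl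
@[simp] theorem qk_imK : qk.imK = 1 := rfl

namespace EllipticTranslation

def k₁ (a b : ℝ) : DH :=
  inl (-((a ^ 2 + b ^ 2)⁻¹ • ((a ^ 2 - b ^ 2) • qi - (2 * a * b) • qk))) -
    inr (((a ^ 2 - b ^ 2) / (a ^ 2 + b ^ 2)) • qj)

def k₂ (a b : ℝ) : DH :=
  inl ((a ^ 2 + b ^ 2)⁻¹ • ((a ^ 2 - b ^ 2) • qi - (2 * a * b) • qk)) -
    inr ((((a ^ 2 + b ^ 2) ^ 2 - 2 * b * (a ^ 2 - b ^ 2)) / (2 * b * (a ^ 2 + b ^ 2))) • qj)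

def k₃ (a b : ℝ) : DH := inl (-qi) + inr (((a ^ 2 - b ^ 2 + 2 * b) / (2 * b)) • qj)

def k₄ : DH := inl qi - inr qj

variable {a b : ℝ}

theorem k₁_add_k₂ (hb : b ≠ 0) : k₁ a b + k₂ a b = -inr (((a ^ 2 + b ^ 2) / (2 * b)) • qj) := by
  have hN : a ^ 2 + b ^ 2 ≠ 0 := by positivity
  have hcoef : (a ^ 2 - b ^ 2) / (a ^ 2 + b ^ 2) +
      ((a ^ 2 + b ^ 2) ^ 2 - 2 * b * (a ^ 2 - b ^ 2)) / (2 * b * (a ^ 2 + b ^ 2)) =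
      (a ^ 2 + b ^ 2) / (2 * b) := by
    field_simp
    ring
  rw [k₁, k₂, ← hcoef, add_smul, inr_add, inl_neg]
  abel

theorem k₁_mul_k₂ (hb : b ≠ 0) :
    k₁ a b * k₂ a b = 1 + inr (a • qi + ((a ^ 2 - b ^ 2) / (2 * b)) • qk) := by
  have hN : a ^ 2 + b ^ 2 ≠ 0 := by positivity
  refine TrivSqZeroExt.ext ?_ ?_ <;> ext <;>
    simp [k₁, k₂, fst_mul, snd_mul, Quaternion.re_one, Quaternion.imI_one, Quaternion.imJ_one,
      Quaternion.imK_one, -mul_eq_zero] <;>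
    field_simp <;> ring

theorem k₃_add_k₄ (hb : b ≠ 0) : k₃ a b + k₄ = -inr (((b ^ 2 - a ^ 2) / (2 * b)) • qj) := by
  have hcoef : (a ^ 2 - b ^ 2 + 2 * b) / (2 * b) = -((b ^ 2 - a ^ 2) / (2 * b)) + 1 := by
    field_simp
    ring
  rw [k₃, k₄, hcoef, add_smul, one_smul, neg_smul, inr_add, inr_neg, inl_neg]
  abel

theorem k₃_mul_k₄ (hb : b ≠ 0) : k₃ a b * k₄ = 1 + inr (((b ^ 2 - a ^ 2) / (2 * b)) • qk) := by
  refine TrivSqZeroExt.ext ?_ ?_ <;> ext <;>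
    simp [k₃, k₄, fst_mul, snd_mul, Quaternion.re_one, Quaternion.imI_one, Quaternion.imJ_one,
      Quaternion.imK_one]
  field_simp
  ring

end EllipticTranslation

theorem multiplication_trick_elliptic_translation_nonplanar_general (a b : ℝ)
    (hb : b > 0) :
    ((X : Polynomial DH) ^ 2 + 1) *
        ((X : Polynomial DH) ^ 2 + 1 +
          Polynomial.C (TrivSqZeroExt.inr (b • qj)) * X +
          Polynomial.C (TrivSqZeroExt.inr (a • qi))) =
      (X - Polynomial.C
        (TrivSqZeroExt.inl (-((a ^ 2 + b ^ 2)⁻¹ • ((a ^ 2 - b ^ 2) • qi - (2 * a * b) • qk))) -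
         TrivSqZeroExt.inr (((a ^ 2 - b ^ 2) / (a ^ 2 + b ^ 2)) • qj))) *
      (X - Polynomial.C
        (TrivSqZeroExt.inl ((a ^ 2 + b ^ 2)⁻¹ • ((a ^ 2 - b ^ 2) • qi - (2 * a * b) • qk)) -
         TrivSqZeroExt.inr
           ((((a ^ 2 + b ^ 2) ^ 2 - 2 * b * (a ^ 2 - b ^ 2)) / (2 * b * (a ^ 2 + b ^ 2))) • qj))) *
      (X - Polynomial.C
        (TrivSqZeroExt.inl (-qi) +
         TrivSqZeroExt.inr (((a ^ 2 - b ^ 2 + 2 * b) / (2 * b)) • qj))) *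
      (X - Polynomial.C (TrivSqZeroExt.inl qi - TrivSqZeroExt.inr qj)) := by
  have hb₀ : b ≠ 0 := hb.ne'
  open EllipticTranslation in
  refine (DualNumber.four_X_sub_C_mul_eq_X_sq_add_one_mul (k₁_add_k₂ hb₀) (k₁_mul_k₂ hb₀)
    (k₃_add_k₄ hb₀) (k₃_mul_k₄ hb₀) ?_ ?_).symm
  · rw [← add_smul]
    congr 1
    field_simp
    ring
  · have hc : (a ^ 2 - b ^ 2) / (2 * b) + (b ^ 2 - a ^ 2) / (2 * b) = 0 := by ring
    rw [add_assoc, ← add_smul, hc, zero_smul, add_zero]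

/-- A non-planar factorization of the elliptic translation via the multiplication
trick: with `k₁, k₂, k₃, k₄` as given, `(t² + 1)·C = (t-k₁)(t-k₂)(t-k₃)(t-k₄)`. -/
theorem multiplication_trick_elliptic_translation_nonplanar (a b : ℝ)
    (hab : a > b) (hb : b > 0) :
    ((X : Polynomial DH) ^ 2 + 1) *
        ((X : Polynomial DH) ^ 2 + 1 +
          Polynomial.C (TrivSqZeroExt.inr (b • qj)) * X +
          Polynomial.C (TrivSqZeroExt.inr (a • qi))) =
      (X - Polynomial.C
        (TrivSqZeroExt.inl (-((a ^ 2 + b ^ 2)⁻¹ • ((a ^ 2 - b ^ 2) • qi - (2 * a * b) • qk))) -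
         TrivSqZeroExt.inr (((a ^ 2 - b ^ 2) / (a ^ 2 + b ^ 2)) • qj))) *
      (X - Polynomial.C
        (TrivSqZeroExt.inl ((a ^ 2 + b ^ 2)⁻¹ • ((a ^ 2 - b ^ 2) • qi - (2 * a * b) • qk)) -
         TrivSqZeroExt.inr
           ((((a ^ 2 + b ^ 2) ^ 2 - 2 * b * (a ^ 2 - b ^ 2)) / (2 * b * (a ^ 2 + b ^ 2))) • qj))) *
      (X - Polynomial.C
        (TrivSqZeroExt.inl (-qi) +
         TrivSqZeroExt.inr (((a ^ 2 - b ^ 2 + 2 * b) / (2 * b)) • qj))) *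
      (X - Polynomial.C (TrivSqZeroExt.inl qi - TrivSqZeroExt.inr qj)) :=
  multiplication_trick_elliptic_translation_nonplanar_general a b hb
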